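/- The vectors g⁰ = (−1,0,−3,0) and g¹ = (1,0,−3,0) are circuits of the 9×4 matrix A_Q defining the Klee-Walkup polytope realization Q̃₄, i.e. for each of these vectors g, the support of A_Q g is minimal with respect to inclusion among the supports of A_Q v over all nonzero v ∈ ℝ⁴. -/
import Mathlib


open Matrix

noncomputable section

/-- The polyhedron `{x ∈ ℝⁿ : A x ≥ b}`. -/
def polySet {m n : ℕ} (A : Matrix (Fin m) (Fin n) ℝ) (b : Fin m → ℝ) : Set (Fin n → ℝ) :=
  {x | ∀ i, b i ≤ A.mulVec x i}

/-- `g` is a circuit of `A`: `g` is nonzero and the support of `A g` is minimal with respect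
to inclusion among the supports of `A v` over all nonzero `v`. -/
def IsCircuit {m n : ℕ} (A : Matrix (Fin m) (Fin n) ℝ) (g : Fin n → ℝ) : Prop :=
  g ≠ 0 ∧ ∀ v : Fin n → ℝ, v ≠ 0 →
    {i | A.mulVec v i ≠ 0} ⊆ {i | A.mulVec g i ≠ 0} →
    {i | A.mulVec v i ≠ 0} = {i | A.mulVec g i ≠ 0}

/-- A circuit walk of length `k` from `u` to `v` in `{x : A x ≥ b}`: a sequence
`u = y⁰, …, yᵏ = v` of points of the polyhedron where each step is a maximal step
in a circuit direction. -/
def IsCircuitWalk {m n : ℕ} (A : Matrix (Fin m) (Fin n) ℝ) (b : Fin m → ℝ)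
    (k : ℕ) (u v : Fin n → ℝ) : Prop :=
  ∃ y : Fin (k + 1) → (Fin n → ℝ),
    y 0 = u ∧ y (Fin.last k) = v ∧ (∀ i, y i ∈ polySet A b) ∧
    ∀ i : Fin k, ∃ g : Fin n → ℝ, ∃ α : ℝ, IsCircuit A g ∧ 0 < α ∧
      y i.succ = y i.castSucc + α • g ∧
      ∀ β : ℝ, α < β → y i.castSucc + β • g ∉ polySet A b
/-- The constraint matrix of the Klee–Walkup polytope realization `Q̃₄`. -/
def AQ : Matrix (Fin 9) (Fin 4) ℝ :=
  !![3, -3, -1, -2;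
     -3, 3, -1, -2;
     -2, 1, -1, -3;
     2, -1, -1, -3;
     -3, -3, 1, -2;
     3, 3, 1, -2;
     1, 2, 1, -3;
     -1, -2, 1, -3;
     0, 0, 0, 2]

/-- The right-hand side of the Klee–Walkup polytope realization `Q̃₄`. -/
def bQ : Fin 9 → ℝ := fun _ => -1

private lemma vec9_5 {α : Type*} (a b c d e f g h i : α) : ![a,b,c,d,e,f,g,h,i] 5 = f := rfl
private lemma vec9_6 {α : Type*} (a b c d e f g h i : α) : ![a,b,c,d,e,f,g,h,i] 6 = g := rfl
private lemma vec9_7 {α : Type*} (a b c d e f g h i : α) : ![a,b,c,d,e,f,g,h,i] 7 = h := rfl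
private lemma vec9_8 {α : Type*} (a b c d e f g h i : α) : ![a,b,c,d,e,f,g,h,i] 8 = i := rfl

private lemma AQ_mulVec (w : Fin 4 → ℝ) : AQ *ᵥ w = ![3*w 0 - 3*w 1 - w 2 - 2*w 3,
    -3*w 0 + 3*w 1 - w 2 - 2*w 3, -2*w 0 + w 1 - w 2 - 3*w 3, 2*w 0 - w 1 - w 2 - 3*w 3,
    -3*w 0 - 3*w 1 + w 2 - 2*w 3, 3*w 0 + 3*w 1 + w 2 - 2*w 3, w 0 + 2*w 1 + w 2 - 3*w 3,
    -w 0 - 2*w 1 + w 2 - 3*w 3, 2*w 3] := by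
  funext i
  fin_cases i <;>
    simp [AQ, Matrix.mulVec, dotProduct, Fin.sum_univ_four,
      show (8:Fin 9) = Fin.succ 7 from rfl, show (7:Fin 9) = Fin.succ 6 from rfl,
      show (6:Fin 9) = Fin.succ 5 from rfl, show (5:Fin 9) = Fin.succ 4 from rfl,
      show (7:Fin 8) = Fin.succ 6 from rfl, show (6:Fin 8) = Fin.succ 5 from rfl,
      show (5:Fin 8) = Fin.succ 4 from rfl, show (4:Fin 8) = Fin.succ 3 from rfl,
      show (6:Fin 7) = Fin.succ 5 from rfl, show (5:Fin 7) = Fin.succ 4 from rfl,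
      show (4:Fin 7) = Fin.succ 3 from rfl, show (3:Fin 7) = Fin.succ 2 from rfl,
      show (5:Fin 6) = Fin.succ 4 from rfl, show (4:Fin 6) = Fin.succ 3 from rfl,
      show (3:Fin 6) = Fin.succ 2 from rfl,
      show (4:Fin 5) = Fin.succ 3 from rfl, show (3:Fin 5) = Fin.succ 2 from rfl,
      show (3:Fin 4) = Fin.succ 2 from rfl, Matrix.cons_val_succ] <;>
    ring

set_option maxHeartbeats 1000000 in
/-- The vectors `g⁰ = (-1, 0, -3, 0)` and `g¹ = (1, 0, -3, 0)` are circuits of the matrix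
`A_Q` defining the Klee–Walkup polytope realization `Q̃₄`. -/
theorem AQ_two_circuits :
    IsCircuit AQ ![-1, 0, -3, 0] ∧ IsCircuit AQ ![1, 0, -3, 0] := by
  have key : ∀ (g : Fin 4 → ℝ), g ≠ 0 →
      (∀ v : Fin 4 → ℝ, v ≠ 0 →
        {i | AQ.mulVec v i ≠ 0} ⊆ {i | AQ.mulVec g i ≠ 0} →
        ∃ c : ℝ, c ≠ 0 ∧ v = c • g) →
      IsCircuit AQ g := by
    intro g hg h
    refine ⟨hg, fun v hv hsub => ?_⟩
    obtain ⟨c, hc, rfl⟩ := h v hv hsub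
    ext i
    simp [Matrix.mulVec_smul, hc, mul_eq_zero]
  constructor
  · apply key
    · intro h
      have := congrFun h 0
      norm_num at this
    · intro v hv hsub
      have e0 : (AQ *ᵥ v) 0 = 0 := by
        by_contra h
        have := hsub h
        simp [AQ_mulVec, Set.mem_setOf_eq] at this
      have e4 : (AQ *ᵥ v) 4 = 0 := by
        by_contra h
        have := hsub h
        simp [AQ_mulVec, Set.mem_setOf_eq] at this
      have e8 : (AQ *ᵥ v) 8 = 0 := by
        by_contra h
        have := hsub h
        simp [AQ_mulVec, vec9_8, Set.mem_setOf_eq] at this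
      rw [AQ_mulVec] at e0 e4 e8
      simp [vec9_8] at e0 e4 e8
      have hv3 : v 3 = 0 := e8
      have hv1 : v 1 = 0 := by linarith
      have hv2 : v 2 = 3 * v 0 := by linarith
      have hv0 : v 0 ≠ 0 := by
        intro h0
        apply hv
        funext i
        fin_cases i <;> simp [h0, hv1, hv2, hv3]
      refine ⟨-(v 0), by simpa using hv0, ?_⟩
      funext i
      fin_cases i <;> simp [hv1, hv2, hv3] <;> ring
  · apply key
    · intro h
      have := congrFun h 0
      norm_num at this
    · intro v hv hsub
      have e1 : (AQ *ᵥ v) 1 = 0 := by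
        by_contra h
        have := hsub h
        simp [AQ_mulVec, Set.mem_setOf_eq] at this
      have e5 : (AQ *ᵥ v) 5 = 0 := by
        by_contra h
        have := hsub h
        simp [AQ_mulVec, vec9_5, Set.mem_setOf_eq] at this
      have e8 : (AQ *ᵥ v) 8 = 0 := by
        by_contra h
        have := hsub h
        simp [AQ_mulVec, vec9_8, Set.mem_setOf_eq] at this
      rw [AQ_mulVec] at e1 e5 e8
      simp [vec9_5, vec9_8] at e1 e5 e8
      have hv3 : v 3 = 0 := e8
      have hv1 : v 1 = 0 := by linarith
      have hv2 : v 2 = -3 * v 0 := by linarith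
      have hv0 : v 0 ≠ 0 := by
        intro h0
        apply hv
        funext i
        fin_cases i <;> simp [h0, hv1, hv2, hv3]
      refine ⟨v 0, hv0, ?_⟩
      funext i
      fin_cases i <;> simp [hv1, hv2, hv3] <;> ring
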